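/- arXiv:2510.17182 — 2 statements merged into one kernel-verified Lean document; each statement's English description precedes it below -/
import Mathlib

section
/- Let F be a set of edges with capacities c : F → ℝ≥0, let d = vol_F be the vertex measure d(v) = Σ_{e ∈ F incident to v} c(e), and let d' ≤ d satisfy ‖d'‖₁ ≥ 0.8·‖d‖₁. Let F' ⊆ F be the set of edges not incident to any vertex in U = {v : d'(v) ≤ d(v)/2}. Then vol_{F'}(v) ≤ 2·d'(v) for all v, and c(F') ≥ 0.2 · c(F). -/
/-!
On `U` we have `d ≤ 2 (d - d')`, so the edges touching `U` weigh at most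
`∑_{v ∈ U} d v ≤ 2 ∑_v (d v - d' v) ≤ 0.4 ∑_v d v ≤ 0.8 c(F)`, because every edge is counted at
most twice in `∑_v d v`. Off `U`, `vol_{F'} ≤ d < 2 d'`; on `U`, `vol_{F'}` vanishes.
-/

open Finset

namespace EdgeVolume

variable {V E : Type*} [DecidableEq V] (tail head : E → V) (c : E → ℝ)

def vol (F : Finset E) (v : V) : ℝ :=
  ∑ e ∈ F.filter (fun e => tail e = v ∨ head e = v), c e

variable {tail head c}

lemma vol_eq_sum_ite (F : Finset E) (v : V) :
    vol tail head c F v = ∑ e ∈ F, if tail e = v ∨ head e = v then c e else 0 :=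
  sum_filter _ _

lemma vol_mono {F' F : Finset E} (hF : F' ⊆ F) (hc : ∀ e ∈ F, 0 ≤ c e) (v : V) :
    vol tail head c F' v ≤ vol tail head c F v :=
  sum_le_sum_of_subset_of_nonneg (monotone_filter_left _ hF)
    fun e he _ => hc e (mem_filter.mp he).1

lemma vol_filter_avoiding_eq_zero (F : Finset E) {U : Finset V} {v : V} (hv : v ∈ U) :
    vol tail head c (F.filter fun e => tail e ∉ U ∧ head e ∉ U) v = 0 := by
  refine sum_eq_zero fun e he => absurd hv ?_
  simp only [mem_filter] at he
  obtain ⟨⟨_, htail, hhead⟩, rfl | rfl⟩ := he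
  exacts [htail, hhead]

lemma sum_vol_le_two_mul_sum [Fintype V] {F : Finset E} (hc : ∀ e ∈ F, 0 ≤ c e) :
    ∑ v, vol tail head c F v ≤ 2 * ∑ e ∈ F, c e := by
  have hsplit : ∀ e ∈ F, ∀ v, (if tail e = v ∨ head e = v then c e else 0) ≤
      (if tail e = v then c e else 0) + (if head e = v then c e else 0) := by
    intro e he v
    have := hc e he
    split_ifs <;> simp_all
  calc ∑ v, vol tail head c F v
      = ∑ e ∈ F, ∑ v, if tail e = v ∨ head e = v then c e else 0 := by
        simp only [vol_eq_sum_ite]; exact sum_comm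
    _ ≤ ∑ e ∈ F, ∑ v, ((if tail e = v then c e else 0) + (if head e = v then c e else 0)) :=
        sum_le_sum fun e he => sum_le_sum fun v _ => hsplit e he v
    _ = 2 * ∑ e ∈ F, c e := by
        simp only [sum_add_distrib, sum_ite_eq, mem_univ, if_true]
        ring

lemma sum_filter_touching_le_sum_vol {F : Finset E} (hc : ∀ e ∈ F, 0 ≤ c e) (U : Finset V) :
    ∑ e ∈ F.filter (fun e => ¬(tail e ∉ U ∧ head e ∉ U)), c e ≤
      ∑ v ∈ U, vol tail head c F v := by
  have hterm_nonneg : ∀ e ∈ F, ∀ v, 0 ≤ if tail e = v ∨ head e = v then c e else 0 :=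
    fun e he v => by split_ifs <;> simp [hc e he]
  have hedge : ∀ e ∈ F, ∀ u ∈ U, tail e = u ∨ head e = u →
      c e ≤ ∑ v ∈ U, if tail e = v ∨ head e = v then c e else 0 := fun e he u hu hinc =>
    (if_pos hinc).symm.le.trans
      (single_le_sum (f := fun v => if tail e = v ∨ head e = v then c e else 0)
        (fun v _ => hterm_nonneg e he v) hu)
  rw [sum_filter]
  calc ∑ e ∈ F, (if ¬(tail e ∉ U ∧ head e ∉ U) then c e else 0)
      ≤ ∑ e ∈ F, ∑ v ∈ U, if tail e = v ∨ head e = v then c e else 0 := by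
        refine sum_le_sum fun e he => ?_
        split_ifs with hfar
        · exact sum_nonneg fun v _ => hterm_nonneg e he v
        · rw [not_and_or, not_not, not_not] at hfar
          rcases hfar with htail | hhead
          exacts [hedge e he _ htail (Or.inl rfl), hedge e he _ hhead (Or.inr rfl)]
    _ = ∑ v ∈ U, vol tail head c F v := by
        simp only [vol_eq_sum_ite]; exact sum_comm

end EdgeVolume

lemma Finset.sum_filter_le_half_le_two_mul_sum_sub {V : Type*} [Fintype V] {f g : V → ℝ}
    (hgf : ∀ v, g v ≤ f v) :
    ∑ v ∈ univ.filter (fun v => g v ≤ f v / 2), f v ≤ 2 * ∑ v, (f v - g v) := by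
  rw [mul_sum]
  calc ∑ v ∈ univ.filter (fun v => g v ≤ f v / 2), f v
      ≤ ∑ v ∈ univ.filter (fun v => g v ≤ f v / 2), 2 * (f v - g v) :=
        sum_le_sum fun v hv => by linarith [(mem_filter.mp hv).2]
    _ ≤ ∑ v, 2 * (f v - g v) :=
        sum_le_sum_of_subset_of_nonneg (subset_univ _) fun v _ _ => by linarith [hgf v]

open EdgeVolume in
theorem stmt3_general (V E : Type*) [Fintype V] [DecidableEq V]
    (tail head : E → V) (F : Finset E) (c : E → ℝ)
    (hc : ∀ e ∈ F, 0 < c e)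
    (d' : V → ℝ) (hd'0 : ∀ v, 0 ≤ d' v)
    (hle : ∀ v, d' v ≤ ∑ e ∈ F.filter (fun e => tail e = v ∨ head e = v), c e)
    (hsum : 0.8 * ∑ v, ∑ e ∈ F.filter (fun e => tail e = v ∨ head e = v), c e
      ≤ ∑ v, d' v) :
    let d : V → ℝ := fun v => ∑ e ∈ F.filter (fun e => tail e = v ∨ head e = v), c e
    let U : Finset V := Finset.univ.filter (fun v => d' v ≤ d v / 2)
    let F' : Finset E := F.filter (fun e => tail e ∉ U ∧ head e ∉ U)
    (∀ v, ∑ e ∈ F'.filter (fun e => tail e = v ∨ head e = v), c e ≤ 2 * d' v)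
    ∧ 0.2 * ∑ e ∈ F, c e ≤ ∑ e ∈ F', c e := by
  intro d U F'
  have hc0 : ∀ e ∈ F, 0 ≤ c e := fun e he => (hc e he).le
  refine ⟨fun v => ?_, ?_⟩
  · change vol tail head c F' v ≤ 2 * d' v
    by_cases hv : v ∈ U
    · rw [vol_filter_avoiding_eq_zero F hv]
      linarith [hd'0 v]
    · have hv' : d v / 2 < d' v := by simpa [U] using hv
      have hsub : vol tail head c F' v ≤ d v := vol_mono (filter_subset _ F) hc0 v
      linarith
  · have hsplit := sum_filter_add_sum_filter_not F (fun e : E => tail e ∉ U ∧ head e ∉ U) c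
    have htouch : ∑ e ∈ F.filter (fun e => ¬(tail e ∉ U ∧ head e ∉ U)), c e ≤ ∑ v ∈ U, d v :=
      sum_filter_touching_le_sum_vol hc0 U
    have hU : ∑ v ∈ U, d v ≤ 2 * (∑ v, d v - ∑ v, d' v) := by
      rw [← sum_sub_distrib]
      exact sum_filter_le_half_le_two_mul_sum_sub hle
    have htotal : ∑ v, d v ≤ 2 * ∑ e ∈ F, c e := sum_vol_le_two_mul_sum hc0
    change 0.8 * ∑ v, d v ≤ _ at hsum
    norm_num at hsum ⊢
    linarith

/-- Let F be a set of edges with positive capacities, no self-loops,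
d = vol_F, and d' ≤ d with ‖d'‖₁ ≥ 0.8·‖d‖₁. Let F' ⊆ F be the edges not incident
to any vertex of U = {v : d'(v) ≤ d(v)/2}. Then vol_{F'}(v) ≤ 2·d'(v) for all v and
c(F') ≥ 0.2·c(F). -/
theorem stmt3 (V E : Type*) [Fintype V] [Fintype E] [DecidableEq V]
    (tail head : E → V) (F : Finset E) (c : E → ℝ)
    (hc : ∀ e ∈ F, 0 < c e) (hloop : ∀ e ∈ F, tail e ≠ head e)
    (d' : V → ℝ) (hd'0 : ∀ v, 0 ≤ d' v)
    (hle : ∀ v, d' v ≤ ∑ e ∈ F.filter (fun e => tail e = v ∨ head e = v), c e)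
    (hsum : 0.8 * ∑ v, ∑ e ∈ F.filter (fun e => tail e = v ∨ head e = v), c e
      ≤ ∑ v, d' v) :
    let d : V → ℝ := fun v => ∑ e ∈ F.filter (fun e => tail e = v ∨ head e = v), c e
    let U : Finset V := Finset.univ.filter (fun v => d' v ≤ d v / 2)
    let F' : Finset E := F.filter (fun e => tail e ∉ U ∧ head e ∉ U)
    (∀ v, ∑ e ∈ F'.filter (fun e => tail e = v ∨ head e = v), c e ≤ 2 * d' v)
    ∧ 0.2 * ∑ e ∈ F, c e ≤ ∑ e ∈ F', c e :=
  stmt3_general V E tail head F c hc d' hd'0 hle hsum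
end

section
/- Let star A_F be a bidirectional star with center r on the tails of a set of edges E_C, where the star edge at the tail of e has capacity ψ·c(e). If a flow f is a sum of flows along simple augmenting paths, each passing through the center r at most once, and the total flow value is |f|, then the total capacity of star edges saturated by f is at most 2|f|; consequently, the set P of edges in E_C whose corresponding star edge is saturated satisfies c(P) ≤ 2|f|/ψ. -/
/-!
Each path of value `a` puts `a` units of flow on each of its at most two star edges, so the
total flow on star edges is at most `2|f|`. A saturated star edge carries at least its capacity,
hence the saturated capacities sum to at most `2|f|`. An edge of `P` contributes `ψ c(e)` for
at least one of its two saturated star edges, which gives `ψ c(P) ≤ 2|f|`.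
-/

open Finset

namespace Finset

theorem sum_sum_filter_mem {α β M : Type*} [Fintype α] [DecidableEq α] [Fintype β]
    [AddCommMonoid M] (t : β → Finset α) (f : β → M) :
    ∑ a, ∑ b ∈ univ.filter (fun b => a ∈ t b), f b = ∑ b, #(t b) • f b := by
  simp only [sum_filter]
  rw [sum_comm]
  refine sum_congr rfl fun b _ => ?_
  rw [← sum_filter, filter_univ_mem, sum_const]

theorem sum_sum_filter_mem_le {α β : Type*} [Fintype α] [DecidableEq α] [Fintype β]
    (t : β → Finset α) (f : β → ℝ) (hf : ∀ b, 0 ≤ f b) (k : ℕ)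
    (ht : ∀ b, #(t b) ≤ k) :
    ∑ a, ∑ b ∈ univ.filter (fun b => a ∈ t b), f b ≤ k * ∑ b, f b := by
  rw [sum_sum_filter_mem, mul_sum]
  refine sum_le_sum fun b _ => ?_
  rw [nsmul_eq_mul]
  exact mul_le_mul_of_nonneg_right (by exact_mod_cast ht b) (hf b)

theorem sum_filter_le_le_sum {α : Type*} [Fintype α] (u v : α → ℝ) (hv : ∀ a, 0 ≤ v a)
    [DecidablePred fun a => u a ≤ v a] :
    ∑ a ∈ univ.filter (fun a => u a ≤ v a), u a ≤ ∑ a, v a :=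
  calc ∑ a ∈ univ.filter (fun a => u a ≤ v a), u a
      ≤ ∑ a ∈ univ.filter (fun a => u a ≤ v a), v a :=
        sum_le_sum fun _ ha => (mem_filter.mp ha).2
    _ ≤ ∑ a, v a := sum_le_sum_of_subset_of_nonneg (filter_subset _ _) fun a _ _ => hv a

theorem sum_filter_exists_mem_le {α β : Type*} [Fintype α] [DecidableEq α]
    (s : Finset (α × β)) [DecidablePred fun a => ∃ b, (a, b) ∈ s] (f : α → ℝ)
    (hf : ∀ a, 0 ≤ f a) :
    ∑ a ∈ univ.filter (fun a => ∃ b, (a, b) ∈ s), f a ≤ ∑ x ∈ s, f x.1 := by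
  have hproj : univ.filter (fun a => ∃ b, (a, b) ∈ s) = s.image Prod.fst := by
    ext a
    simp
  rw [hproj]
  exact sum_image_le_of_nonneg fun a _ => hf a

end Finset

theorem stmt17_general (ι P : Type*) [Fintype ι] [Fintype P] [DecidableEq ι]
    (c : ι → ℝ) (hc : ∀ e, 0 < c e) (ψ : ℝ) (hψ0 : 0 < ψ)
    (val : P → ℝ) (hval : ∀ p, 0 < val p)
    (uses : P → Finset (ι × Bool)) (huses : ∀ p, (uses p).card ≤ 2) :
    let F : ℝ := ∑ p, val p
    let g : ι × Bool → ℝ := fun s => ∑ p ∈ Finset.univ.filter (fun p => s ∈ uses p), val p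
    let sat : Finset (ι × Bool) := Finset.univ.filter (fun s => ψ * c s.1 ≤ g s)
    (∑ s ∈ sat, ψ * c s.1 ≤ 2 * F)
    ∧ (∑ e ∈ Finset.univ.filter (fun e : ι => ∃ b, (e, b) ∈ sat), c e ≤ 2 * F / ψ) := by
  intro F g sat
  have hsat : ∑ s ∈ sat, ψ * c s.1 ≤ 2 * F := by
    calc ∑ s ∈ sat, ψ * c s.1 ≤ ∑ s, g s :=
          sum_filter_le_le_sum _ g fun s => sum_nonneg fun p _ => (hval p).le
      _ ≤ 2 * F := by
          exact_mod_cast sum_sum_filter_mem_le uses val (fun p => (hval p).le) 2 huses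
  refine ⟨hsat, ?_⟩
  rw [le_div_iff₀ hψ0, mul_comm, mul_sum]
  calc ∑ e ∈ univ.filter (fun e : ι => ∃ b, (e, b) ∈ sat), ψ * c e
      ≤ ∑ s ∈ sat, ψ * c s.1 :=
        sum_filter_exists_mem_le sat _ fun e => (mul_pos hψ0 (hc e)).le
    _ ≤ 2 * F := hsat

/-- Saturated star edges. The star on edge set ι has, for each e : ι,
two directed star edges (e, true) and (e, false) of capacity ψ·c(e). The flow f is a
sum of simple paths p of positive value val p, each using at most two star edges
(uses p). Let g be the induced flow on star edges and |f| = Σ val. Then the total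
capacity of saturated star edges is at most 2·|f|, and the set P of edges of ι whose
star edge is saturated satisfies c(P) ≤ 2·|f|/ψ. -/
theorem stmt17 (ι P : Type*) [Fintype ι] [Fintype P] [DecidableEq ι] [DecidableEq P]
    (c : ι → ℝ) (hc : ∀ e, 0 < c e) (ψ : ℝ) (hψ0 : 0 < ψ) (hψ1 : ψ ≤ 1)
    (val : P → ℝ) (hval : ∀ p, 0 < val p)
    (uses : P → Finset (ι × Bool)) (huses : ∀ p, (uses p).card ≤ 2) :
    let F : ℝ := ∑ p, val p
    let g : ι × Bool → ℝ := fun s => ∑ p ∈ Finset.univ.filter (fun p => s ∈ uses p), val p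
    let sat : Finset (ι × Bool) := Finset.univ.filter (fun s => ψ * c s.1 ≤ g s)
    (∑ s ∈ sat, ψ * c s.1 ≤ 2 * F)
    ∧ (∑ e ∈ Finset.univ.filter (fun e : ι => ∃ b, (e, b) ∈ sat), c e ≤ 2 * F / ψ) :=
  stmt17_general ι P c hc ψ hψ0 val hval uses huses
end
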